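/- The family of maps τ_z acts simply transitively on ℝ⁴: for all x, x̃ ∈ ℝ⁴ there exists a unique z ∈ ℝ⁴ such that τ_z(x) = x̃. -/

import Mathlib

/-- The transformation `τ_z : ℝ⁴ → ℝ⁴` (indices `0,…,3` for coordinates `1,…,4`). -/
noncomputable def τ (k : ℝ) (z x : Fin 4 → ℝ) : Fin 4 → ℝ :=
  ![x 0 - z 0 + 2 * z 3 - k * Real.exp (k * z 3 / 2) * z 2 * x 3,
    x 1 - z 3,
    x 2 * Real.exp (-(k * z 3) / 2) - z 2,
    x 3 * Real.exp (k * z 3 / 2) - z 1]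

open Real

theorem tau_eq_iff (k : ℝ) (z x xt : Fin 4 → ℝ) :
    τ k z x = xt ↔
      z 3 = x 1 - xt 1 ∧
      z 2 = x 2 * exp (-(k * z 3) / 2) - xt 2 ∧
      z 1 = x 3 * exp (k * z 3 / 2) - xt 3 ∧
      z 0 = x 0 + 2 * z 3 - k * exp (k * z 3 / 2) * z 2 * x 3 - xt 0 := by
  simp only [τ, funext_iff, Fin.forall_fin_succ, Matrix.cons_val_zero, Matrix.cons_val_succ,
    Fin.succ_zero_eq_one, Fin.succ_one_eq_two, Matrix.cons_val_fin_one, Fin.reduceSucc,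
    IsEmpty.forall_iff, and_true]
  constructor <;> rintro ⟨h₀, h₁, h₂, h₃⟩ <;> refine ⟨?_, ?_, ?_, ?_⟩ <;> linarith

noncomputable def tauSolve (k : ℝ) (x xt : Fin 4 → ℝ) : Fin 4 → ℝ :=
  let z₃ := x 1 - xt 1
  let z₂ := x 2 * exp (-(k * z₃) / 2) - xt 2
  ![x 0 + 2 * z₃ - k * exp (k * z₃ / 2) * z₂ * x 3 - xt 0, x 3 * exp (k * z₃ / 2) - xt 3, z₂, z₃]

theorem tau_eq_iff_eq_tauSolve (k : ℝ) (z x xt : Fin 4 → ℝ) :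
    τ k z x = xt ↔ z = tauSolve k x xt := by
  rw [tau_eq_iff]
  constructor
  · rintro ⟨h₃, h₂, h₁, h₀⟩
    ext i
    fin_cases i <;> simp [tauSolve, h₀, h₁, h₂, h₃]
  · rintro rfl
    simp [tauSolve]

theorem tau_simply_transitive_general (k : ℝ) (x xt : Fin 4 → ℝ) :
    ∃! z : Fin 4 → ℝ, τ k z x = xt := by
  simp only [tau_eq_iff_eq_tauSolve, existsUnique_eq]

/-- The family `τ_z` acts simply transitively on `ℝ⁴`: for all
`x, x̃ ∈ ℝ⁴` there is a unique `z ∈ ℝ⁴` with `τ_z x = x̃`. -/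
theorem tau_simply_transitive (k : ℝ) (hk : 0 < k) (x xt : Fin 4 → ℝ) :
    ∃! z : Fin 4 → ℝ, τ k z x = xt :=
  tau_simply_transitive_general k x xt
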